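/- Let A be an n×n real matrix with all entries nonnegative that is primitive, i.e., there exists k ≥ 1 such that every entry of Aᵏ is strictly positive. Let x⁽⁰⁾ ∈ ℝ^n be a vector with nonnegative components, x⁽⁰⁾ ≠ 0, and define the normalized power iteration x⁽ᵏ⁾ = Aᵏ x⁽⁰⁾ / ‖Aᵏ x⁽⁰⁾‖₁, where ‖·‖₁ denotes the sum of absolute values of the components. Then the sequence (x⁽ᵏ⁾) converges to the unique vector x* ∈ ℝ^n that is an eigenvector of A for its dominant eigenvalue, has all components nonnegative, and satisfies ‖x*‖₁ = 1; in particular x* is nonnegative and nonzero. -/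

import Mathlib

/-!
With `B = A ^ k` positive and commuting with `A`, a maximiser `x` of the Collatz–Wielandt function
`x ↦ minᵢ (A B x)ᵢ / (B x)ᵢ` on the simplex gives a positive eigenvector `v = B x` of `A`: with
`c` the maximum, if `A v - c v` were a nonzero nonnegative vector, applying `B` would make it
positive and `B v` would do strictly better.

With `A v = c v`, the matrix `D = c⁻¹ V⁻¹ A V` (`V = diagonal v`) is row-stochastic and `D ^ k` is
positive. So each `D ^ m r` is a weighted average of `r` and, once every `k` steps, with all
weights at least some `ε > 0`; hence `max - min` of `D ^ m r` shrinks by the factor `1 - ε` and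
`D ^ m r` tends to a constant. Equivalently `c⁻ᵐ Aᵐ p → L(p) v` for every real `p`. This gives
the convergence of the power iteration, the uniqueness of the normalised eigenvector, and, applied
to the real and imaginary parts of an eigenvector for `μ`, that `(μ / c) ^ m` converges, so that
`‖μ‖ < c` or `μ = c`.
-/

open Matrix Filter Finset Topology

lemma norm_lt_one_or_eq_one_of_tendsto_pow {𝕜 : Type*} [NormedField 𝕜] {ζ z : 𝕜}
    (h : Tendsto (fun m : ℕ => ζ ^ m) atTop (𝓝 z)) : ‖ζ‖ < 1 ∨ ζ = 1 := by
  have hz : ζ * z = z := tendsto_nhds_unique (h.const_mul ζ)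
    (by simpa [pow_succ'] using (tendsto_add_atTop_iff_nat 1).mpr h)
  refine or_iff_not_imp_right.mpr fun hζ => ?_
  have hz0 : z = 0 := by
    have : (ζ - 1) * z = 0 := by rw [sub_mul, hz, one_mul, sub_self]
    exact (mul_eq_zero.mp this).resolve_left (sub_ne_zero.mpr hζ)
  simpa [Function.comp_def, hz0] using tendsto_norm.comp h

section L1Normalize

variable {ι : Type*} [Fintype ι]

noncomputable def l1Normalize (y : ι → ℝ) : ι → ℝ :=
  (∑ i, |y i|)⁻¹ • y

lemma l1Normalize_smul (y : ι → ℝ) {t : ℝ} (ht : 0 < t) :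
    l1Normalize (t • y) = l1Normalize y := by
  simp [l1Normalize, abs_mul, abs_of_pos ht, ← mul_sum, smul_smul, ht.ne']

lemma l1Normalize_eq_self {y : ι → ℝ} (hy : ∑ i, |y i| = 1) : l1Normalize y = y := by
  simp [l1Normalize, hy]

lemma continuousAt_l1Normalize {y : ι → ℝ} (hy : y ≠ 0) : ContinuousAt l1Normalize y := by
  have hsum : ∑ i, |y i| ≠ 0 := by
    obtain ⟨j, hj⟩ := Function.ne_iff.mp hy
    exact (sum_pos' (fun i _ => abs_nonneg (y i)) ⟨j, mem_univ j, abs_pos.mpr hj⟩).ne'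
  exact ((continuous_finsetSum _ fun i _ => (continuous_apply i).abs).continuousAt.inv₀
    hsum).smul continuousAt_id

end L1Normalize

namespace Matrix

variable {ι : Type*} [Fintype ι]

lemma mulVec_nonneg_of_nonneg {B : Matrix ι ι ℝ} (hB : ∀ i j, 0 ≤ B i j) {x : ι → ℝ}
    (hx : 0 ≤ x) : 0 ≤ B *ᵥ x :=
  fun i => sum_nonneg fun j _ => mul_nonneg (hB i j) (hx j)

lemma mulVec_pos_of_pos {B : Matrix ι ι ℝ} (hB : ∀ i j, 0 < B i j) {x : ι → ℝ}
    (hx : 0 ≤ x) (hx0 : x ≠ 0) (i : ι) : 0 < (B *ᵥ x) i := by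
  obtain ⟨j, hj⟩ := Function.ne_iff.mp hx0
  exact sum_pos' (fun l _ => mul_nonneg (hB i l).le (hx l))
    ⟨j, mem_univ j, mul_pos (hB i j) ((hx j).lt_of_ne' hj)⟩

lemma pow_mulVec_eq_pow_smul {R : Type*} [CommSemiring R] [DecidableEq ι] {M : Matrix ι ι R}
    {v : ι → R} {c : R} (h : M *ᵥ v = c • v) (m : ℕ) : (M ^ m) *ᵥ v = c ^ m • v := by
  induction m with
  | zero => simp
  | succ m ih => rw [pow_succ, ← mulVec_mulVec, h, mulVec_smul, ih, smul_smul, ← pow_succ']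

lemma mem_spectrum_iff_exists_mulVec_eq_smul {K : Type*} [Field K] [DecidableEq ι]
    {M : Matrix ι ι K} {μ : K} : μ ∈ spectrum K M ↔ ∃ w ≠ 0, M *ᵥ w = μ • w := by
  rw [← spectrum_toLin', ← Module.End.hasEigenvalue_iff_mem_spectrum]
  constructor
  · intro h
    obtain ⟨w, hw⟩ := h.exists_hasEigenvector
    exact ⟨w, hw.2, by simpa using hw.apply_eq_smul⟩
  · rintro ⟨w, hw, h⟩
    exact Module.End.hasEigenvalue_of_hasEigenvector
      ⟨by simpa [Module.End.mem_eigenspace_iff] using h, hw⟩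

lemma map_ofReal_mulVec_apply (M : Matrix ι ι ℝ) (w : ι → ℂ) (i : ι) :
    (M.map Complex.ofReal *ᵥ w) i =
      (M *ᵥ fun j => (w j).re) i + (M *ᵥ fun j => (w j).im) i * Complex.I := by
  apply Complex.ext <;> simp [mulVec, dotProduct, Complex.re_sum, Complex.im_sum]

section CollatzWielandt

variable [Nonempty ι]

noncomputable def collatzWielandt (A : Matrix ι ι ℝ) (x : ι → ℝ) : ℝ :=
  univ.inf' univ_nonempty fun i => (A *ᵥ x) i / x i

lemma collatzWielandt_smul (A : Matrix ι ι ℝ) (x : ι → ℝ) {t : ℝ} (ht : t ≠ 0) :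
    collatzWielandt A (t • x) = collatzWielandt A x := by
  simp only [collatzWielandt, mulVec_smul, Pi.smul_apply, smul_eq_mul, mul_div_mul_left _ _ ht]

lemma collatzWielandt_mul_le (A : Matrix ι ι ℝ) {x : ι → ℝ} (hx : ∀ i, 0 < x i) (i : ι) :
    collatzWielandt A x * x i ≤ (A *ᵥ x) i :=
  (le_div_iff₀ (hx i)).mp (inf'_le _ (mem_univ i))

lemma lt_collatzWielandt_iff (A : Matrix ι ι ℝ) {x : ι → ℝ} (hx : ∀ i, 0 < x i) {c : ℝ} :
    c < collatzWielandt A x ↔ ∀ i, c * x i < (A *ᵥ x) i := by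
  simp [collatzWielandt, lt_inf'_iff, lt_div_iff₀ (hx _)]

theorem exists_pos_eigenvector_of_commute [DecidableEq ι] {A B : Matrix ι ι ℝ}
    (hB : ∀ i j, 0 < B i j) (hAB : Commute A B) :
    ∃ v : ι → ℝ, (∀ i, 0 < v i) ∧ ∑ i, v i = 1 ∧ ∃ c : ℝ, A *ᵥ v = c • v := by
  have hBpos : ∀ x ∈ stdSimplex ℝ ι, ∀ i, 0 < (B *ᵥ x) i := fun x hx =>
    mulVec_pos_of_pos hB hx.1 fun h => by simpa [h] using hx.2
  have hcont : ContinuousOn (fun x => collatzWielandt A (B *ᵥ x)) (stdSimplex ℝ ι) :=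
    ContinuousOn.finset_inf'_apply _ fun i _ =>
      ContinuousOn.div (by fun_prop) (by fun_prop) fun x hx => (hBpos x hx i).ne'
  obtain ⟨x, hx, hmax⟩ := (isCompact_stdSimplex ℝ ι).exists_isMaxOn
    ⟨_, single_mem_stdSimplex ℝ (Classical.arbitrary ι)⟩ hcont
  set y := B *ᵥ x
  have hy : ∀ i, 0 < y i := hBpos x hx
  have hy1 : 0 < ∑ i, y i := sum_pos (fun i _ => hy i) univ_nonempty
  set c := collatzWielandt A y
  suffices hAy : A *ᵥ y = c • y by
    refine ⟨(∑ i, y i)⁻¹ • y, fun i => mul_pos (inv_pos.mpr hy1) (hy i), ?_, c, ?_⟩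
    · simp [← mul_sum, hy1.ne']
    · rw [mulVec_smul, hAy, smul_comm]
  by_contra hne
  have hz : 0 ≤ A *ᵥ y - c • y := fun i => by
    simpa using collatzWielandt_mul_le A hy i
  have hBz := mulVec_pos_of_pos hB hz (sub_ne_zero.mpr hne)
  have hcomm : ∀ z, B *ᵥ (A *ᵥ z) = A *ᵥ (B *ᵥ z) := fun z => by
    rw [mulVec_mulVec, mulVec_mulVec, hAB.eq]
  have hbetter : c < collatzWielandt A (B *ᵥ y) :=
    (lt_collatzWielandt_iff A (mulVec_pos_of_pos hB (fun i => (hy i).le)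
      (fun h => (hy (Classical.arbitrary ι)).ne' (congrFun h _)))).mpr fun i => by
        simpa [mulVec_sub, mulVec_smul, hcomm] using hBz i
  have hy' : (∑ i, y i)⁻¹ • y ∈ stdSimplex ℝ ι :=
    ⟨fun i => mul_nonneg (inv_nonneg.mpr hy1.le) (hy i).le, by simp [← mul_sum, hy1.ne']⟩
  have hle := isMaxOn_iff.mp hmax _ hy'
  rw [mulVec_smul, collatzWielandt_smul A _ (inv_ne_zero hy1.ne')] at hle
  exact hle.not_gt hbetter

end CollatzWielandt

section Stochastic

variable [DecidableEq ι] {D : Matrix ι ι ℝ}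

lemma mulVec_apply_le_of_mem_rowStochastic (hD : D ∈ rowStochastic ℝ ι) {r : ι → ℝ} {b : ℝ}
    (hr : ∀ j, r j ≤ b) (i : ι) : (D *ᵥ r) i ≤ b :=
  calc (D *ᵥ r) i = ∑ j, D i j * r j := rfl
    _ ≤ ∑ j, D i j * b := sum_le_sum fun j _ => mul_le_mul_of_nonneg_left (hr j)
        (nonneg_of_mem_rowStochastic hD)
    _ = b := by rw [← sum_mul, sum_row_of_mem_rowStochastic hD, one_mul]

lemma le_mulVec_apply_of_mem_rowStochastic (hD : D ∈ rowStochastic ℝ ι) {r : ι → ℝ} {a : ℝ}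
    (hr : ∀ j, a ≤ r j) (i : ι) : a ≤ (D *ᵥ r) i := by
  simpa [mulVec_neg] using
    mulVec_apply_le_of_mem_rowStochastic hD (r := -r) (b := -a) (fun j => neg_le_neg (hr j)) i

lemma mulVec_apply_le_sub_of_mem_rowStochastic (hD : D ∈ rowStochastic ℝ ι) {ε : ℝ}
    (hε : ∀ i j, ε ≤ D i j) {r : ι → ℝ} {b : ℝ} (hr : ∀ j, r j ≤ b) (i j : ι) :
    (D *ᵥ r) i ≤ b - ε * (b - r j) := by
  have hgap : b - (D *ᵥ r) i = ∑ l, D i l * (b - r l) := by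
    simp only [mul_sub, sum_sub_distrib, ← sum_mul, sum_row_of_mem_rowStochastic hD, one_mul]
    rfl
  have hj : D i j * (b - r j) ≤ ∑ l, D i l * (b - r l) :=
    single_le_sum (f := fun l => D i l * (b - r l))
      (fun l _ => mul_nonneg (nonneg_of_mem_rowStochastic hD) (sub_nonneg.mpr (hr l))) (mem_univ j)
  linarith [mul_le_mul_of_nonneg_right (hε i j) (sub_nonneg.mpr (hr j))]

variable [Nonempty ι]

lemma iSup_sub_iInf_mulVec_le_of_mem_rowStochastic (hD : D ∈ rowStochastic ℝ ι) {ε : ℝ}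
    (hε : ∀ i j, ε ≤ D i j) (r : ι → ℝ) :
    (⨆ i, (D *ᵥ r) i) - ⨅ i, (D *ᵥ r) i ≤ (1 - ε) * ((⨆ i, r i) - ⨅ i, r i) := by
  have hr_le (j : ι) : r j ≤ ⨆ i, r i := le_ciSup (Finite.bddAbove_range r) j
  have hle_r (j : ι) : ⨅ i, r i ≤ r j := ciInf_le (Finite.bddBelow_range r) j
  obtain ⟨j⟩ := ‹Nonempty ι›
  have hsup : ⨆ i, (D *ᵥ r) i ≤ (⨆ i, r i) - ε * ((⨆ i, r i) - r j) :=
    ciSup_le fun i => mulVec_apply_le_sub_of_mem_rowStochastic hD hε hr_le i j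
  have hinf : (⨅ i, r i) + ε * (r j - ⨅ i, r i) ≤ ⨅ i, (D *ᵥ r) i :=
    le_ciInf fun i => by
      have := mulVec_apply_le_sub_of_mem_rowStochastic hD hε (r := -r) (b := -⨅ i, r i)
        (fun l => neg_le_neg (hle_r l)) i j
      simp only [mulVec_neg, Pi.neg_apply] at this
      linarith
  linarith

theorem exists_tendsto_pow_mulVec_of_mem_rowStochastic (hD : D ∈ rowStochastic ℝ ι) {k : ℕ}
    (hk : ∀ i j, 0 < (D ^ k) i j) (r : ι → ℝ) :
    ∃ L : ℝ, Tendsto (fun m => D ^ m *ᵥ r) atTop (𝓝 fun _ => L) := by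
  set s : ℕ → ι → ℝ := fun m => D ^ m *ᵥ r
  have hs (m l : ℕ) : s (m + l) = D ^ l *ᵥ s m := by
    simp only [s, mulVec_mulVec, ← pow_add, add_comm]
  set M : ℕ → ℝ := fun m => ⨆ i, s m i
  set N : ℕ → ℝ := fun m => ⨅ i, s m i
  have hN_le (m : ℕ) (i : ι) : N m ≤ s m i := ciInf_le (Finite.bddBelow_range _) i
  have hle_M (m : ℕ) (i : ι) : s m i ≤ M m := le_ciSup (Finite.bddAbove_range _) i
  have hM : Antitone M := antitone_nat_of_succ_le fun m => ciSup_le fun i => by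
    rw [hs m 1, pow_one]
    exact mulVec_apply_le_of_mem_rowStochastic hD (hle_M m) i
  have hN : Monotone N := monotone_nat_of_le_succ fun m => le_ciInf fun i => by
    rw [hs m 1, pow_one]
    exact le_mulVec_apply_of_mem_rowStochastic hD (hN_le m) i
  obtain ⟨i₀⟩ := ‹Nonempty ι›
  have hNM (m l : ℕ) : N m ≤ M l :=
    calc N m ≤ N (max m l) := hN (le_max_left m l)
      _ ≤ M (max m l) := (hN_le _ i₀).trans (hle_M _ i₀)
      _ ≤ M l := hM (le_max_right m l)
  have hMlim : Tendsto M atTop (𝓝 (⨅ m, M m)) :=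
    tendsto_atTop_ciInf hM ⟨N 0, by rintro _ ⟨m, rfl⟩; exact hNM 0 m⟩
  have hNlim : Tendsto N atTop (𝓝 (⨆ m, N m)) :=
    tendsto_atTop_ciSup hN ⟨M 0, by rintro _ ⟨m, rfl⟩; exact hNM m 0⟩
  obtain ⟨⟨a, b⟩, hmin⟩ := Finite.exists_min fun p : ι × ι => (D ^ k) p.1 p.2
  have hcontract (m : ℕ) : M (m + k) - N (m + k) ≤ (1 - (D ^ k) a b) * (M m - N m) := by
    simp only [M, N, hs m k]
    exact iSup_sub_iInf_mulVec_le_of_mem_rowStochastic (pow_mem hD k) (fun i j => hmin (i, j)) _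
  have hgap : (⨅ m, M m) - ⨆ m, N m ≤ (1 - (D ^ k) a b) * ((⨅ m, M m) - ⨆ m, N m) :=
    le_of_tendsto_of_tendsto' (((tendsto_add_atTop_iff_nat k).mpr hMlim).sub
      ((tendsto_add_atTop_iff_nat k).mpr hNlim)) ((hMlim.sub hNlim).const_mul _) hcontract
  have hNM_lim : ⨆ m, N m ≤ ⨅ m, M m := le_of_tendsto_of_tendsto' hNlim hMlim fun m => hNM m m
  have hlim_eq : ⨆ m, N m = ⨅ m, M m := by nlinarith [hk a b]
  refine ⟨⨅ m, M m, tendsto_pi_nhds.mpr fun i => ?_⟩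
  exact tendsto_of_tendsto_of_tendsto_of_le_of_le (hlim_eq ▸ hNlim) hMlim (hN_le · i) (hle_M · i)

lemma pos_of_tendsto_pow_mulVec_of_mem_rowStochastic (hD : D ∈ rowStochastic ℝ ι) {k : ℕ}
    (hk : ∀ i j, 0 < (D ^ k) i j) {r : ι → ℝ} (hr : 0 ≤ r) (hr0 : r ≠ 0) {L : ℝ}
    (h : Tendsto (fun m => D ^ m *ᵥ r) atTop (𝓝 fun _ => L)) : 0 < L := by
  obtain ⟨i₀, hi₀⟩ := Finite.exists_min (D ^ k *ᵥ r)
  refine (mulVec_pos_of_pos hk hr hr0 i₀).trans_le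
    (ge_of_tendsto (((continuous_apply i₀).tendsto _).comp h) ?_)
  filter_upwards [eventually_ge_atTop k] with m hm
  obtain ⟨l, rfl⟩ := Nat.exists_eq_add_of_le' hm
  rw [Function.comp_apply, pow_add, ← mulVec_mulVec]
  exact le_mulVec_apply_of_mem_rowStochastic (pow_mem hD l) hi₀ i₀

end Stochastic

section Perron

variable [DecidableEq ι]

noncomputable def stochasticNormalization (A : Matrix ι ι ℝ) (c : ℝ) (v : ι → ℝ) :
    Matrix ι ι ℝ :=
  c⁻¹ • (diagonal v⁻¹ * A * diagonal v)

variable {A : Matrix ι ι ℝ} {c : ℝ} {v : ι → ℝ}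

lemma stochasticNormalization_pow (hv : ∀ i, v i ≠ 0) (m : ℕ) :
    stochasticNormalization A c v ^ m = (c ^ m)⁻¹ • (diagonal v⁻¹ * A ^ m * diagonal v) := by
  have hvv : diagonal v * diagonal v⁻¹ = 1 := by
    rw [diagonal_mul_diagonal, ← diagonal_one]
    exact congrArg diagonal (funext fun i => mul_inv_cancel₀ (hv i))
  have hvv' : diagonal v⁻¹ * diagonal v = 1 := by
    rw [diagonal_mul_diagonal, ← diagonal_one]
    exact congrArg diagonal (funext fun i => inv_mul_cancel₀ (hv i))
  rw [stochasticNormalization, smul_pow, inv_pow]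
  congr 1
  induction m with
  | zero => rw [pow_zero, pow_zero, Matrix.mul_one, hvv']
  | succ m ih =>
    rw [pow_succ, ih, pow_succ]
    simp only [Matrix.mul_assoc]
    rw [← Matrix.mul_assoc (diagonal v), hvv, Matrix.one_mul]

lemma inv_pow_smul_pow_mulVec_eq_stochasticNormalization (hv : ∀ i, v i ≠ 0) (m : ℕ)
    (p : ι → ℝ) :
    (c ^ m)⁻¹ • (A ^ m *ᵥ p) = v * (stochasticNormalization A c v ^ m *ᵥ (v⁻¹ * p)) := by
  have hp : diagonal v *ᵥ (v⁻¹ * p) = p := funext fun i => by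
    simp [mulVec_diagonal, hv]
  ext i
  simp [stochasticNormalization_pow hv, smul_mulVec, ← mulVec_mulVec, mulVec_diagonal, hp]
  field_simp [hv i]

lemma mem_rowStochastic_stochasticNormalization (hA : ∀ i j, 0 ≤ A i j) (hv : ∀ i, 0 < v i)
    (hc : 0 < c) (hAv : A *ᵥ v = c • v) : stochasticNormalization A c v ∈ rowStochastic ℝ ι := by
  refine mem_rowStochastic.mpr ⟨fun i j => ?_, ?_⟩
  · simp only [stochasticNormalization, smul_apply, diagonal_mul, mul_diagonal, Pi.inv_apply,
      smul_eq_mul]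
    have := hv i; have := hv j; have := hA i j
    positivity
  · have h1 : diagonal v *ᵥ 1 = v := funext fun i => by simp [mulVec_diagonal]
    ext i
    simp [stochasticNormalization, smul_mulVec, ← mulVec_mulVec, h1, hAv, mulVec_diagonal]
    field_simp [(hv i).ne', hc.ne']

lemma stochasticNormalization_pow_pos {k : ℕ} (hk : ∀ i j, 0 < (A ^ k) i j) (hv : ∀ i, 0 < v i)
    (hc : 0 < c) (i j : ι) : 0 < (stochasticNormalization A c v ^ k) i j := by
  rw [stochasticNormalization_pow fun i => (hv i).ne']
  simp only [smul_apply, diagonal_mul, mul_diagonal, Pi.inv_apply, smul_eq_mul]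
  have := hv i; have := hv j; have := hk i j
  positivity

variable [Nonempty ι]

lemma pos_of_mulVec_eq_smul (hA : ∀ i j, 0 ≤ A i j) {k : ℕ} (hk0 : k ≠ 0)
    (hk : ∀ i j, 0 < (A ^ k) i j) (hv : ∀ i, 0 < v i) (hAv : A *ᵥ v = c • v) : 0 < c := by
  obtain ⟨i⟩ := ‹Nonempty ι›
  have hv0 : v ≠ 0 := fun h => (hv i).ne' (congrFun h i)
  have h1 : 0 ≤ c * v i := by
    simpa [hAv] using mulVec_nonneg_of_nonneg hA (fun j => (hv j).le) i
  have h2 : 0 < c ^ k * v i := by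
    simpa [pow_mulVec_eq_pow_smul hAv] using mulVec_pos_of_pos hk (fun j => (hv j).le) hv0 i
  rcases (nonneg_of_mul_nonneg_left h1 (hv i)).lt_or_eq with hc | hc
  · exact hc
  · simp [← hc, zero_pow hk0] at h2

theorem exists_tendsto_inv_pow_smul_pow_mulVec (hA : ∀ i j, 0 ≤ A i j) {k : ℕ}
    (hk : ∀ i j, 0 < (A ^ k) i j) (hv : ∀ i, 0 < v i) (hc : 0 < c) (hAv : A *ᵥ v = c • v)
    (p : ι → ℝ) : ∃ L : ℝ, Tendsto (fun m => (c ^ m)⁻¹ • (A ^ m *ᵥ p)) atTop (𝓝 (L • v)) := by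
  obtain ⟨L, hL⟩ := exists_tendsto_pow_mulVec_of_mem_rowStochastic
    (mem_rowStochastic_stochasticNormalization hA hv hc hAv)
    (stochasticNormalization_pow_pos hk hv hc) (v⁻¹ * p)
  refine ⟨L, ?_⟩
  simp_rw [inv_pow_smul_pow_mulVec_eq_stochasticNormalization fun i => (hv i).ne']
  convert tendsto_const_nhds.mul hL using 2
  ext i
  simp [mul_comm]

lemma pos_of_tendsto_inv_pow_smul_pow_mulVec (hA : ∀ i j, 0 ≤ A i j) {k : ℕ}
    (hk : ∀ i j, 0 < (A ^ k) i j) (hv : ∀ i, 0 < v i) (hc : 0 < c) (hAv : A *ᵥ v = c • v)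
    {p : ι → ℝ} (hp : 0 ≤ p) (hp0 : p ≠ 0) {L : ℝ}
    (h : Tendsto (fun m => (c ^ m)⁻¹ • (A ^ m *ᵥ p)) atTop (𝓝 (L • v))) : 0 < L := by
  refine pos_of_tendsto_pow_mulVec_of_mem_rowStochastic
    (mem_rowStochastic_stochasticNormalization hA hv hc hAv)
    (stochasticNormalization_pow_pos hk hv hc) (r := v⁻¹ * p)
    (fun i => mul_nonneg (inv_nonneg.mpr (hv i).le) (hp i)) ?_ ?_
  · obtain ⟨j, hj⟩ := Function.ne_iff.mp hp0
    exact Function.ne_iff.mpr ⟨j, mul_ne_zero (inv_ne_zero (hv j).ne') hj⟩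
  · have hseq : (fun m => stochasticNormalization A c v ^ m *ᵥ (v⁻¹ * p)) =
        fun m => v⁻¹ * ((c ^ m)⁻¹ • (A ^ m *ᵥ p)) := by
      ext m i
      simp [inv_pow_smul_pow_mulVec_eq_stochasticNormalization fun i => (hv i).ne', (hv i).ne']
    rw [hseq]
    convert (tendsto_const_nhds (x := v⁻¹)).mul h using 2
    ext i
    simp only [Pi.mul_apply, Pi.smul_apply, Pi.inv_apply, smul_eq_mul]
    field_simp [(hv i).ne']

theorem exists_eq_smul_of_mulVec_eq_smul (hA : ∀ i j, 0 ≤ A i j) {k : ℕ}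
    (hk : ∀ i j, 0 < (A ^ k) i j) (hv : ∀ i, 0 < v i) (hc : 0 < c) (hAv : A *ᵥ v = c • v)
    {y : ι → ℝ} (hy : A *ᵥ y = c • y) : ∃ t : ℝ, y = t • v := by
  obtain ⟨L, hL⟩ := exists_tendsto_inv_pow_smul_pow_mulVec hA hk hv hc hAv y
  refine ⟨L, tendsto_nhds_unique ?_ hL⟩
  simp_rw [pow_mulVec_eq_pow_smul hy, inv_smul_smul₀ (pow_ne_zero _ hc.ne')]
  exact tendsto_const_nhds

theorem norm_lt_of_mem_spectrum (hA : ∀ i j, 0 ≤ A i j) {k : ℕ}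
    (hk : ∀ i j, 0 < (A ^ k) i j) (hv : ∀ i, 0 < v i) (hc : 0 < c) (hAv : A *ᵥ v = c • v)
    {μ : ℂ} (hμ : μ ∈ spectrum ℂ (A.map Complex.ofReal)) (hμc : μ ≠ c) : ‖μ‖ < c := by
  obtain ⟨w, hw0, hw⟩ := mem_spectrum_iff_exists_mulVec_eq_smul.mp hμ
  obtain ⟨j, hj⟩ := Function.ne_iff.mp hw0
  obtain ⟨L₁, h₁⟩ := exists_tendsto_inv_pow_smul_pow_mulVec hA hk hv hc hAv fun i => (w i).re
  obtain ⟨L₂, h₂⟩ := exists_tendsto_inv_pow_smul_pow_mulVec hA hk hv hc hAv fun i => (w i).im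
  have hpow (m : ℕ) : (μ / c) ^ m = ((((c ^ m)⁻¹ • (A ^ m *ᵥ fun i => (w i).re)) j : ℝ) +
      (((c ^ m)⁻¹ • (A ^ m *ᵥ fun i => (w i).im)) j : ℝ) * Complex.I) / w j := by
    have hmap : A.map Complex.ofReal ^ m = (A ^ m).map Complex.ofReal :=
      (Matrix.map_pow A Complex.ofRealHom m).symm
    have h := congrFun (pow_mulVec_eq_pow_smul hw m) j
    rw [hmap, map_ofReal_mulVec_apply, Pi.smul_apply, smul_eq_mul] at h
    rw [div_pow, eq_div_iff hj]
    push_cast [Pi.smul_apply, smul_eq_mul]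
    linear_combination -(c ^ m : ℂ)⁻¹ * h
  have hlim : Tendsto (fun m => (μ / c) ^ m) atTop
      (𝓝 (((((L₁ • v) j : ℝ) : ℂ) + ((L₂ • v) j : ℝ) * Complex.I) / w j)) := by
    simp_rw [hpow]
    have hre := Complex.continuous_ofReal.continuousAt.tendsto.comp
      (((continuous_apply j).tendsto _).comp h₁)
    have him := Complex.continuous_ofReal.continuousAt.tendsto.comp
      (((continuous_apply j).tendsto _).comp h₂)
    exact (hre.add (him.mul_const Complex.I)).div_const (w j)
  rcases norm_lt_one_or_eq_one_of_tendsto_pow hlim with h | h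
  · rwa [norm_div, Complex.norm_real, Real.norm_of_nonneg hc.le, div_lt_one hc] at h
  · exact absurd ((div_eq_one_iff_eq (by exact_mod_cast hc.ne')).mp h) hμc

end Perron

end Matrix

/-- Normalized power iteration for a nonnegative primitive matrix `A`: starting
from any nonnegative nonzero vector `x⁽⁰⁾`, the sequence
`x⁽ᵏ⁾ = Aᵏ x⁽⁰⁾ / ‖Aᵏ x⁽⁰⁾‖₁` converges to the unique vector `x*` that is an
eigenvector of `A` for its dominant eigenvalue, has all components nonnegative,
and has `‖x*‖₁ = 1`; in particular `x*` is nonnegative and nonzero. -/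
theorem normalized_power_iteration_converges
    (n : ℕ)
    (A : Matrix (Fin n) (Fin n) ℝ)
    (hA : ∀ i j, 0 ≤ A i j)
    (hprim : ∃ k : ℕ, 1 ≤ k ∧ ∀ i j, 0 < (A ^ k) i j)
    (x₀ : Fin n → ℝ)
    (hx₀ : ∀ i, 0 ≤ x₀ i)
    (hx₀ne : x₀ ≠ 0)
    (x : ℕ → Fin n → ℝ)
    (hx : ∀ k, x k = (∑ i, |((A ^ k).mulVec x₀) i|)⁻¹ • (A ^ k).mulVec x₀) :
    ∃ c : ℝ, c ∈ spectrum ℝ A ∧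
      (∀ μ : ℂ, μ ∈ spectrum ℂ (A.map Complex.ofReal) → μ ≠ (c : ℂ) →
        ‖μ‖ < c) ∧
      ∃ xstar : Fin n → ℝ,
        (A.mulVec xstar = c • xstar ∧ (∀ i, 0 ≤ xstar i) ∧
          ∑ i, |xstar i| = 1) ∧
        (∀ y : Fin n → ℝ,
          (A.mulVec y = c • y ∧ (∀ i, 0 ≤ y i) ∧ ∑ i, |y i| = 1) →
            y = xstar) ∧
        Tendsto x atTop (nhds xstar) ∧
        xstar ≠ 0 := by
  obtain ⟨k, hk1, hk⟩ := hprim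
  have : Nonempty (Fin n) := ⟨(Function.ne_iff.mp hx₀ne).choose⟩
  obtain ⟨v, hv, hv1, c, hAv⟩ :=
    exists_pos_eigenvector_of_commute hk ((Commute.refl A).pow_right k)
  have hc : 0 < c := pos_of_mulVec_eq_smul hA (by omega) hk hv hAv
  have hv0 : v ≠ 0 := fun h => (hv (Classical.arbitrary _)).ne' (congrFun h _)
  have hvabs : ∑ i, |v i| = 1 := by simpa [abs_of_pos (hv _)] using hv1
  refine ⟨c, mem_spectrum_iff_exists_mulVec_eq_smul.mpr ⟨v, hv0, hAv⟩,
    fun μ hμ hμc => norm_lt_of_mem_spectrum hA hk hv hc hAv hμ hμc,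
    v, ⟨hAv, fun i => (hv i).le, hvabs⟩, ?_, ?_, hv0⟩
  · rintro y ⟨hy, hy0, hy1⟩
    obtain ⟨t, rfl⟩ := exists_eq_smul_of_mulVec_eq_smul hA hk hv hc hAv hy
    have ht0 : 0 ≤ t := nonneg_of_mul_nonneg_left (hy0 (Classical.arbitrary _)) (hv _)
    have ht1 : t = 1 := by
      simpa [abs_mul, ← mul_sum, hvabs, abs_of_nonneg ht0] using hy1
    rw [ht1, one_smul]
  · obtain ⟨L, hL⟩ := exists_tendsto_inv_pow_smul_pow_mulVec hA hk hv hc hAv x₀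
    have hL0 := pos_of_tendsto_inv_pow_smul_pow_mulVec hA hk hv hc hAv hx₀ hx₀ne hL
    have hx' : x = fun m => l1Normalize ((c ^ m)⁻¹ • (A ^ m *ᵥ x₀)) := funext fun m => by
      rw [hx, l1Normalize_smul _ (inv_pos.mpr (pow_pos hc m))]
      rfl
    rw [hx', ← l1Normalize_eq_self hvabs, ← l1Normalize_smul v hL0]
    exact (continuousAt_l1Normalize (smul_ne_zero hL0.ne' hv0)).tendsto.comp hL
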